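/- Define the weight function w on (0,1] by: w(x) = 1 for x > 59/96; w(x) = 1 for x in (1/2,59/96] (c-items); w(x) = 1/2 for x in (37/96,1/2] (b-items); w(x) = 3/7 for x in (1/3,37/96] (a-items); w(x) = 1/(k+1) for x in (1/(k+2),1/(k+1)] with 2 ≤ k ≤ 18; and w(x) = 20x/19 for x ≤ 1/20. Then for any finite multiset of items with total size at most 1, the total weight is at most 373/228. -/

import Mathlib

/-!
An item larger than `1/5` lies in one of the classes `(1/2, 1]`, `(37/96, 1/2]`, `(1/3, 37/96]`,
`(1/4, 1/3]`, `(1/5, 1/4]`, on which the weight is constant (`1, 1/2, 3/7, 1/3, 1/4`) and the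
size exceeds the lower end of the class. An item of size at most `1/k`, `3 ≤ k ≤ 19`, has weight
at most `(1 + 1/k)` times its size, so the items of size at most `1/5` weigh at most `6/5` of the
room left by the larger ones, and at most `9/8` resp. `20/19` of it when that room is below `1/8`
resp. `1/19`. What remains is a finite check over the class counts. The extremal configuration is
one item from each of `(1/2, 1]`, `(1/4, 1/3]`, `(1/5, 1/4]` together with small items of total
size `1/20`: `1 + 1/3 + 1/4 + 1/19 = 373/228`.
-/

/-- The weight function of Case 2 of the analysis of Refined Harmonic Match:
`w x = 1` for `x > 59/96` and for `x ∈ (1/2, 59/96]` (c-items), `w x = 1/2` for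
`x ∈ (37/96, 1/2]` (b-items), `w x = 3/7` for `x ∈ (1/3, 37/96]` (a-items),
`w x = 1/(k+1)` for `x ∈ (1/(k+2), 1/(k+1)]` with `2 ≤ k ≤ 18` (equivalently
`w x = 1/⌊1/x⌋` for `x ∈ (1/20, 1/3]`), and `w x = 20x/19` for `x ≤ 1/20`. -/
noncomputable def wCase2 (x : ℝ) : ℝ :=
  if 1 / 2 < x then 1
  else if 37 / 96 < x then 1 / 2
  else if 1 / 3 < x then 3 / 7
  else if 1 / 20 < x then 1 / (⌊1 / x⌋ : ℝ)
  else 20 * x / 19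

theorem wCase2_of_le_one_twentieth {x : ℝ} (hx : x ≤ 1 / 20) : wCase2 x = 20 * x / 19 := by
  rw [wCase2, if_neg (by linarith), if_neg (by linarith), if_neg (by linarith),
    if_neg (by linarith)]

theorem wCase2_of_mem_Ioc_one_twentieth_one_third {x : ℝ} (hx : x ∈ Set.Ioc (1 / 20) (1 / 3)) :
    wCase2 x = 1 / ⌊1 / x⌋ := by
  rw [wCase2, if_neg (by linarith [hx.2]), if_neg (by linarith [hx.2]),
    if_neg (by linarith [hx.2]), if_pos hx.1]

theorem wCase2_eq_inv_of_mem_Ioc {n : ℕ} (hn3 : 3 ≤ n) (hn19 : n ≤ 19) {x : ℝ}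
    (hx : x ∈ Set.Ioc (1 / ((n : ℝ) + 1)) (1 / n)) : wCase2 x = 1 / n := by
  have hx0 : 0 < x := lt_trans (by positivity) hx.1
  have hfloor : ⌊1 / x⌋ = n := by
    have hxn := hx.2
    have hxn1 := hx.1
    rw [le_div_iff₀ (by positivity)] at hxn
    rw [div_lt_iff₀ (by positivity)] at hxn1
    rw [Int.floor_eq_iff, le_div_iff₀ hx0, div_lt_iff₀ hx0]
    push_cast
    constructor <;> linarith
  have hn : (3 : ℝ) ≤ n := by exact_mod_cast hn3
  have hn19' : (n : ℝ) ≤ 19 := by exact_mod_cast hn19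
  rw [wCase2_of_mem_Ioc_one_twentieth_one_third, hfloor, Int.cast_natCast]
  constructor
  · calc (1 : ℝ) / 20 ≤ 1 / (n + 1) := by gcongr; linarith
      _ < x := hx.1
  · exact hx.2.trans (by gcongr)

theorem wCase2_le_mul_of_le_inv {k : ℕ} (hk3 : 3 ≤ k) (hk19 : k ≤ 19) {x : ℝ} (hx : 0 < x)
    (hxk : x ≤ 1 / k) : wCase2 x ≤ (1 + 1 / k) * x := by
  have hk : (3 : ℝ) ≤ k := by exact_mod_cast hk3
  have hk19' : (k : ℝ) ≤ 19 := by exact_mod_cast hk19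
  rcases le_or_gt x (1 / 20) with h20 | h20
  · calc wCase2 x = (1 + 1 / 19) * x := by rw [wCase2_of_le_one_twentieth h20]; ring
      _ ≤ (1 + 1 / k) * x := by gcongr
  · rw [wCase2_of_mem_Ioc_one_twentieth_one_third ⟨h20, hxk.trans (by gcongr)⟩]
    have hkx : ((k : ℤ) : ℝ) ≤ 1 / x := by
      rw [Int.cast_natCast, le_one_div (by positivity) hx]; exact hxk
    have hkn : (k : ℝ) ≤ ⌊1 / x⌋ := by exact_mod_cast Int.le_floor.mpr hkx
    have hn : (0 : ℝ) < ⌊1 / x⌋ := by linarith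
    have hnx : 1 < (⌊1 / x⌋ + 1) * x := by
      rw [← div_lt_iff₀ hx]; exact Int.lt_floor_add_one _
    calc 1 / (⌊1 / x⌋ : ℝ) ≤ (1 + 1 / ⌊1 / x⌋) * x := by
          rw [div_le_iff₀ hn]; field_simp; linarith
      _ ≤ (1 + 1 / k) * x := by gcongr

theorem wCase2_cases_of_one_fifth_lt {x : ℝ} (hx : 1 / 5 < x) :
    (wCase2 x = 1 ∧ 1 / 2 < x) ∨ (wCase2 x = 1 / 2 ∧ 37 / 96 < x) ∨
      (wCase2 x = 3 / 7 ∧ 1 / 3 < x) ∨ (wCase2 x = 1 / 3 ∧ 1 / 4 < x) ∨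
      (wCase2 x = 1 / 4 ∧ 1 / 5 < x) := by
  by_cases h3 : 1 / 3 < x
  · unfold wCase2
    split_ifs <;> simp_all
  by_cases h4 : 1 / 4 < x
  · have := wCase2_eq_inv_of_mem_Ioc (n := 3) (x := x) le_rfl (by norm_num)
      ⟨by norm_num; linarith, by norm_num; linarith⟩
    norm_num at this
    simp_all
  · have := wCase2_eq_inv_of_mem_Ioc (n := 4) (x := x) (by norm_num) (by norm_num)
      ⟨by norm_num; linarith, by norm_num; linarith⟩
    norm_num at this
    simp_all

-- `a, b, c, d, e` count the items in `(1/2, 1]`, `(37/96, 1/2]`, `(1/3, 37/96]`, `(1/4, 1/3]`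
-- and `(1/5, 1/4]`.
noncomputable def classWeight (a b c d e : ℕ) : ℝ := a + b / 2 + 3 / 7 * c + d / 3 + e / 4

noncomputable def classFloor (a b c d e : ℕ) : ℝ := a / 2 + 37 / 96 * b + c / 3 + d / 4 + e / 5

theorem exists_sum_map_wCase2_eq_classWeight (L : List ℝ) (hL : ∀ x ∈ L, 1 / 5 < x) :
    ∃ a b c d e : ℕ, (L.map wCase2).sum = classWeight a b c d e ∧
      (classFloor a b c d e < L.sum ∨ classFloor a b c d e = 0 ∧ L.sum = 0) := by
  induction L with
  | nil => exact ⟨0, 0, 0, 0, 0, by simp [classWeight], by simp [classFloor]⟩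
  | cons x L ih =>
    obtain ⟨a, b, c, d, e, hw, hf⟩ := ih fun y hy => hL y (List.mem_cons_of_mem x hy)
    have hf' : classFloor a b c d e ≤ L.sum := by rcases hf with hf | hf <;> linarith
    simp only [List.map_cons, List.sum_cons, hw, classWeight, classFloor] at hf' ⊢
    rcases wCase2_cases_of_one_fifth_lt (hL x List.mem_cons_self) with
      ⟨hwx, hx⟩ | ⟨hwx, hx⟩ | ⟨hwx, hx⟩ | ⟨hwx, hx⟩ | ⟨hwx, hx⟩
    · refine ⟨a + 1, b, c, d, e, ?_, Or.inl ?_⟩ <;> push_cast <;> linarith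
    · refine ⟨a, b + 1, c, d, e, ?_, Or.inl ?_⟩ <;> push_cast <;> linarith
    · refine ⟨a, b, c + 1, d, e, ?_, Or.inl ?_⟩ <;> push_cast <;> linarith
    · refine ⟨a, b, c, d + 1, e, ?_, Or.inl ?_⟩ <;> push_cast <;> linarith
    · refine ⟨a, b, c, d, e + 1, ?_, Or.inl ?_⟩ <;> push_cast <;> linarith

/-- Scaled by 480 and by 159600: `hfit` says that the class floors sum to less than `1`, the
conclusion that the class weights exceed `6/5` times the floors by at most `373/228 - 6/5`. -/
theorem nat_class_excess_le (a b c d e : ℕ)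
    (hfit : 240 * a + 185 * b + 160 * c + 120 * d + 96 * e < 480)
    (hA : ¬(a = 1 ∧ b = 0 ∧ c = 0 ∧ d = 1 ∧ e = 1))
    (hB : ¬(a = 1 ∧ b = 1 ∧ c = 0 ∧ d = 0 ∧ e = 0)) :
    63840 * a + 5985 * b + 4560 * c + 5320 * d + 1596 * e ≤ 69580 := by
  have ha : a ≤ 1 := by omega
  have hb : b ≤ 2 := by omega
  have hc : c ≤ 2 := by omega
  have hd : d ≤ 3 := by omega
  have he : e ≤ 4 := by omega
  interval_cases a <;> interval_cases b <;> interval_cases c <;> interval_cases d <;>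
    interval_cases e <;> omega

theorem classWeight_add_le (a b c d e : ℕ) {S W : ℝ} (hfit : classFloor a b c d e < 1)
    (hS : S ≤ 1 - classFloor a b c d e) (h5 : W ≤ 6 / 5 * S)
    (h8 : S ≤ 1 / 8 → W ≤ 9 / 8 * S) (h19 : S ≤ 1 / 19 → W ≤ 20 / 19 * S) :
    classWeight a b c d e + W ≤ 373 / 228 := by
  unfold classWeight
  unfold classFloor at hfit hS
  by_cases hA : a = 1 ∧ b = 0 ∧ c = 0 ∧ d = 1 ∧ e = 1
  · obtain ⟨rfl, rfl, rfl, rfl, rfl⟩ := hA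
    norm_num at hS ⊢
    linarith [h19 (by linarith)]
  by_cases hB : a = 1 ∧ b = 1 ∧ c = 0 ∧ d = 0 ∧ e = 0
  · obtain ⟨rfl, rfl, rfl, rfl, rfl⟩ := hB
    norm_num at hS ⊢
    linarith [h8 (by linarith)]
  have hfit' : 240 * a + 185 * b + 160 * c + 120 * d + 96 * e < 480 := by
    exact_mod_cast (by linarith : (240 * a + 185 * b + 160 * c + 120 * d + 96 * e : ℝ) < 480)
  have hexcess : (63840 * a + 5985 * b + 4560 * c + 5320 * d + 1596 * e : ℝ) ≤ 69580 := by
    exact_mod_cast nat_class_excess_le a b c d e hfit' hA hB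
  linarith

theorem sum_map_wCase2_le_of_forall_le_inv {k : ℕ} (hk3 : 3 ≤ k) (hk19 : k ≤ 19) {s : List ℝ}
    (hs : ∀ x ∈ s, 0 < x ∧ x ≤ 1 / k) : (s.map wCase2).sum ≤ (1 + 1 / k) * s.sum := by
  calc (s.map wCase2).sum ≤ (s.map fun x => (1 + 1 / (k : ℝ)) * x).sum :=
        List.sum_le_sum fun x hx => wCase2_le_mul_of_le_inv hk3 hk19 (hs x hx).1 (hs x hx).2
    _ = (1 + 1 / k) * s.sum := by rw [List.sum_map_mul_left, List.map_id']

theorem sum_map_wCase2_le_of_sum_le_inv {k : ℕ} (hk3 : 3 ≤ k) (hk19 : k ≤ 19) {s : List ℝ}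
    (hs : ∀ x ∈ s, 0 < x) (hsum : s.sum ≤ 1 / k) : (s.map wCase2).sum ≤ (1 + 1 / k) * s.sum :=
  sum_map_wCase2_le_of_forall_le_inv hk3 hk19 fun x hx =>
    ⟨hs x hx, (List.single_le_sum (fun y hy => (hs y hy).le) x hx).trans hsum⟩

/-- Any multiset of items from (0,1] with total size at most 1 has total Case-2
weight at most 373/228. -/
theorem case2_weight_bound (l : List ℝ)
    (h : ∀ x ∈ l, 0 < x ∧ x ≤ 1) (hsum : l.sum ≤ 1) :
    (l.map wCase2).sum ≤ 373 / 228 := by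
  have hsplit := List.sum_map_filter_add_sum_map_filter_not (1 / 5 < ·) id l
  simp only [List.map_id] at hsplit
  rw [← List.sum_map_filter_add_sum_map_filter_not (1 / 5 < ·)]
  set L := l.filter (1 / 5 < ·)
  set s := l.filter fun x => ¬1 / 5 < x
  have hL : ∀ x ∈ L, 1 / 5 < x := fun x hx => by simpa using (List.mem_filter.mp hx).2
  have hs : ∀ x ∈ s, 0 < x ∧ x ≤ 1 / 5 := fun x hx => by
    obtain ⟨hxl, hx5⟩ := List.mem_filter.mp hx
    exact ⟨(h x hxl).1, by simpa using hx5⟩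
  have hs0 : ∀ x ∈ s, 0 < x := fun x hx => (hs x hx).1
  have hs_nonneg : 0 ≤ s.sum := List.sum_nonneg fun x hx => (hs0 x hx).le
  obtain ⟨a, b, c, d, e, hW, hF⟩ := exists_sum_map_wCase2_eq_classWeight L hL
  have h5 := sum_map_wCase2_le_of_forall_le_inv (k := 5) (by norm_num) (by norm_num)
    (by simpa using hs)
  have h8 := sum_map_wCase2_le_of_sum_le_inv (k := 8) (s := s) (by norm_num) (by norm_num) hs0
  have h19 := sum_map_wCase2_le_of_sum_le_inv (k := 19) (s := s) (by norm_num) (by norm_num) hs0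
  norm_num at h5 h8 h19
  rw [hW]
  refine classWeight_add_le a b c d e ?_ ?_ h5 h8 h19 <;> rcases hF with hF | ⟨hF, hL0⟩ <;> linarith
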